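/- arXiv:0903.5373 — 2 statements merged into one kernel-verified Lean document; each statement's English description precedes it below -/
import Mathlib

section
/- If P_1,...,P_m are independent with each P_i, i ∈ I_0, uniform on [0,1], and α_1 ≤ ... ≤ α_m ∈ [0,1) satisfy α_i/(1-α_i) ≤ iq/(m+1-i), then the step-down procedure with these critical values has FDR ≤ q, where FDR = E[(V/R)1_{R>0}], V = #{i ∈ I_0 : H_i rejected}, R = total rejections. -/
open MeasureTheory ProbabilityTheory

/-- Order statistics: `orderStat p k` is the (k+1)-st smallest of the values `p`. -/
noncomputable def orderStat {m : ℕ} (p : Fin m → ℝ) : Fin m → ℝ :=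
  fun k => p (Tuple.sort p k)

/-- Number of rejections of the step-down procedure with critical constants
α_1 ≤ … ≤ α_m: R(p) = max{i : p_{(j)} ≤ α_j for all j ≤ i} (0 if none). -/
noncomputable def rejCount (m : ℕ) (α : ℕ → ℝ) (p : Fin m → ℝ) : ℕ :=
  sSup {i : ℕ | i ≤ m ∧ ∀ j : Fin m, (j : ℕ) < i → orderStat p j ≤ α ((j : ℕ) + 1)}

/-- Number of falsely rejected (true null) hypotheses: H_i is rejected iff
P_i ≤ α_R, i.e. iff P_i is among the R smallest p-values. -/
noncomputable def falseRejCount (m : ℕ) (α : ℕ → ℝ) (I₀ : Finset (Fin m))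
    (p : Fin m → ℝ) : ℕ :=
  (I₀.filter fun i => p i ≤ α (rejCount m α p)).card

/-- FDR = E[(V/R) 1_{R>0}]. -/
noncomputable def FDR {Ω : Type*} [MeasurableSpace Ω] (μ : Measure Ω)
    (m : ℕ) (α : ℕ → ℝ) (I₀ : Finset (Fin m)) (P : Fin m → Ω → ℝ) : ℝ :=
  ∫ ω, (if 0 < rejCount m α (fun i => P i ω) then
    (falseRejCount m α I₀ (fun i => P i ω) : ℝ) / (rejCount m α (fun i => P i ω) : ℝ)
    else 0) ∂μ

/-!
For a hypothesis `i`, let `K_i` be one more than the number of step-down rejections among the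
other p-values; it does not depend on `p i`. If `H_i` is rejected then `p i ≤ α K_i` and
`K_i ≤ R`, so `H_i` contributes at most `1{p i ≤ α K_i} / K_i` to `V / R`. Integrating out a
uniform `p i` and using `α_K / (1 - α_K) ≤ K q / (m + 1 - K)` bounds its expected contribution
by `q` times the expectation of `1{α K_i < p i} / (m + 1 - K_i)`. All `i` with `α K_i < p i`
share the same `K_i = K` (the first `k` with fewer than `k` p-values below `α k`), and there are
at most `m + 1 - K` of them, so these weights sum to at most `1`.
-/

open Finset
open scoped ENNReal

theorem Monotone.le_iff_lt_card_filter {β : Type*} [LinearOrder β] {m : ℕ} {f : Fin m → β}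
    (hf : Monotone f) (k : Fin m) (t : β) :
    f k ≤ t ↔ (k : ℕ) < #{j | f j ≤ t} := by
  constructor
  · intro h
    calc (k : ℕ) < #(Iic k) := by simp
      _ ≤ #{j | f j ≤ t} := card_le_card fun j hj => by
        simpa using (hf (mem_Iic.1 hj)).trans h
  · intro h
    by_contra! hk
    have : #{j | f j ≤ t} ≤ #(Iio k) := card_le_card fun j hj => by
      simp only [mem_filter, mem_univ, true_and] at hj
      simpa using lt_of_not_ge fun hkj => (hk.trans_le (hf hkj)).not_ge hj
    rw [Fin.card_Iio] at this
    omega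

theorem measurable_comp_countable {X Y β : Type*} [MeasurableSpace X] [MeasurableSpace Y]
    [MeasurableSpace β] [Countable β] [MeasurableSingletonClass β] {F : X → β → Y} {N : X → β}
    (hF : ∀ b, Measurable fun x => F x b) (hN : Measurable N) : Measurable fun x => F x (N x) :=
  (measurable_from_prod_countable_left (f := fun x : X × β => F x.1 x.2) hF).comp
    (measurable_id.prodMk hN)

theorem lintegral_pi_le_of_update_le {ι : Type*} [Fintype ι] [DecidableEq ι] {X : ι → Type*}
    [∀ i, MeasurableSpace (X i)] {ν : ∀ i, Measure (X i)} [∀ i, SigmaFinite (ν i)]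
    {f g : (∀ i, X i) → ℝ≥0∞} (hf : Measurable f) (hg : Measurable g) (i : ι)
    (h : ∀ x, ∫⁻ u, f (Function.update x i u) ∂ν i ≤ ∫⁻ u, g (Function.update x i u) ∂ν i) :
    ∫⁻ x, f x ∂Measure.pi ν ≤ ∫⁻ x, g x ∂Measure.pi ν :=
  lintegral_le_of_lmarginal_le {i} hf hg <| by
    rw [lmarginal_singleton, lmarginal_singleton]
    exact h

theorem restrict_Icc_zero_one_Iic {a : ℝ} (ha : a ≤ 1) :
    volume.restrict (Set.Icc (0 : ℝ) 1) (Set.Iic a) = ENNReal.ofReal a := by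
  rw [Measure.restrict_apply measurableSet_Iic,
    show Set.Iic a ∩ Set.Icc 0 1 = Set.Icc 0 a by
      ext; grind,
    Real.volume_Icc, sub_zero]

theorem restrict_Icc_zero_one_Ioi {a : ℝ} (ha : 0 ≤ a) :
    volume.restrict (Set.Icc (0 : ℝ) 1) (Set.Ioi a) = ENNReal.ofReal (1 - a) := by
  rw [Measure.restrict_apply measurableSet_Ioi,
    show Set.Ioi a ∩ Set.Icc 0 1 = Set.Ioc a 1 by
      ext; grind,
    Real.volume_Ioc]

theorem inv_mul_ofReal_le_of_div_le {a q : ℝ} {k d : ℕ} (ha0 : 0 ≤ a) (ha1 : a < 1) (hk : 0 < k)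
    (hd : 0 < d) (h : a / (1 - a) ≤ k * q / d) :
    (k : ℝ≥0∞)⁻¹ * ENNReal.ofReal a ≤
      ENNReal.ofReal q * ((d : ℝ≥0∞)⁻¹ * ENNReal.ofReal (1 - a)) := by
  have hk' : (0 : ℝ) < k := by exact_mod_cast hk
  have hd' : (0 : ℝ) < d := by exact_mod_cast hd
  rw [div_le_div_iff₀ (by linarith) hd'] at h
  have hq : 0 ≤ q := by nlinarith [mul_pos hk' (sub_pos.2 ha1), mul_nonneg ha0 hd'.le]
  rw [← ENNReal.ofReal_natCast, ← ENNReal.ofReal_natCast, ← ENNReal.ofReal_inv_of_pos hk',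
    ← ENNReal.ofReal_inv_of_pos hd', ← ENNReal.ofReal_mul (by positivity),
    ← ENNReal.ofReal_mul (by positivity), ← ENNReal.ofReal_mul hq]
  refine ENNReal.ofReal_le_ofReal ?_
  rw [inv_mul_le_iff₀ hk']
  field_simp
  linarith

namespace StepDown

section StepDownIndex

noncomputable def stepDownIndex (n : ℕ) (c : ℕ → ℕ) : ℕ :=
  sSup {k | k ≤ n ∧ ∀ j, 1 ≤ j → j ≤ k → j ≤ c j}

variable {n k : ℕ} {c : ℕ → ℕ}

theorem le_stepDownIndex_iff :
    k ≤ stepDownIndex n c ↔ k ≤ n ∧ ∀ j, 1 ≤ j → j ≤ k → j ≤ c j := by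
  set S := {k | k ≤ n ∧ ∀ j, 1 ≤ j → j ≤ k → j ≤ c j}
  have hbdd : BddAbove S := ⟨n, fun _ hk => hk.1⟩
  have hmem : sSup S ∈ S := Nat.sSup_mem ⟨0, Nat.zero_le n, fun j _ hj => by omega⟩ hbdd
  refine ⟨fun hk => ⟨hk.trans hmem.1, fun j hj1 hjk => hmem.2 j hj1 (hjk.trans hk)⟩,
    fun hk => le_csSup hbdd hk⟩

theorem stepDownIndex_le : stepDownIndex n c ≤ n :=
  (le_stepDownIndex_iff.1 le_rfl).1

theorem le_of_le_stepDownIndex {j : ℕ} (hj1 : 1 ≤ j) (hj : j ≤ stepDownIndex n c) : j ≤ c j :=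
  (le_stepDownIndex_iff.1 le_rfl).2 j hj1 hj

theorem lt_of_stepDownIndex_lt (h : stepDownIndex n c < n) :
    c (stepDownIndex n c + 1) < stepDownIndex n c + 1 := by
  by_contra! hc
  have : stepDownIndex n c + 1 ≤ stepDownIndex n c := by
    refine le_stepDownIndex_iff.2 ⟨h, fun j hj1 hj => ?_⟩
    rcases hj.lt_or_eq with hj | rfl
    · exact le_of_le_stepDownIndex hj1 (Nat.le_of_lt_succ hj)
    · exact hc
  omega

theorem measurable_stepDownIndex {X : Type*} [MeasurableSpace X] {c : X → ℕ → ℕ}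
    (hc : ∀ j, Measurable fun x => c x j) : Measurable fun x => stepDownIndex n (c x) := by
  refine measurable_to_countable' fun k => measurableSet_setOfPred.2 ?_
  have hle (k : ℕ) : Measurable fun x => k ≤ stepDownIndex n (c x) := by
    simp_rw [le_stepDownIndex_iff]
    have (j : ℕ) : Measurable fun x => j ≤ c x j := Measurable.of_discrete.comp (hc j)
    fun_prop
  have heq (x : X) : stepDownIndex n (c x) = k ↔
      k ≤ stepDownIndex n (c x) ∧ ¬ k + 1 ≤ stepDownIndex n (c x) := by
    omega
  simp_rw [Set.mem_singleton_iff, heq]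
  exact (hle k).and (hle (k + 1)).not

end StepDownIndex

section Counting

variable {ι : Type*} [Fintype ι] {p : ι → ℝ} {t s : ℝ}

variable (p) in
noncomputable def countLE (t : ℝ) : ℕ := #{j | p j ≤ t}

theorem measurable_countLE (t : ℝ) : Measurable fun p : ι → ℝ => countLE p t := by
  simp_rw [countLE, card_filter]
  exact measurable_sum _ fun j _ =>
    Measurable.ite (measurableSet_le (measurable_pi_apply j) measurable_const)
      measurable_const measurable_const

variable [DecidableEq ι] (i : ι)

variable (p) in
noncomputable def countLEErase (t : ℝ) : ℕ := #{j ∈ univ.erase i | p j ≤ t}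

theorem countLEErase_mono (h : t ≤ s) : countLEErase p i t ≤ countLEErase p i s :=
  card_le_card <| monotone_filter_right _ fun _ _ hj => hj.trans h

theorem countLEErase_le_countLE : countLEErase p i t ≤ countLE p t :=
  card_le_card <| filter_subset_filter _ (erase_subset _ _)

theorem countLEErase_le_card : countLEErase p i t ≤ Fintype.card ι - 1 :=
  (card_filter_le _ _).trans (card_erase_of_mem (mem_univ i)).le

theorem countLE_eq_countLEErase_add_one (h : p i ≤ t) :
    countLE p t = countLEErase p i t + 1 := by
  rw [countLEErase, filter_erase, card_erase_add_one (by simpa using h), countLE]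

theorem countLE_eq_countLEErase (h : t < p i) : countLE p t = countLEErase p i t := by
  rw [countLEErase, filter_erase, erase_eq_of_notMem (by simpa using h), countLE]

theorem countLEErase_update (u : ℝ) :
    countLEErase (Function.update p i u) i t = countLEErase p i t :=
  congr_arg card <| filter_congr fun _ hj => by rw [Function.update_of_ne (ne_of_mem_erase hj)]

theorem measurable_countLEErase (t : ℝ) : Measurable fun p : ι → ℝ => countLEErase p i t := by
  simp_rw [countLEErase, card_filter]
  exact measurable_sum _ fun j _ =>
    Measurable.ite (measurableSet_le (measurable_pi_apply j) measurable_const)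
      measurable_const measurable_const

end Counting

section Rejections

variable {m : ℕ} (α : ℕ → ℝ) (p : Fin m → ℝ)

theorem orderStat_le_iff (k : Fin m) (t : ℝ) :
    orderStat p k ≤ t ↔ (k : ℕ) < countLE p t := by
  have hcount : #{j | (p ∘ Tuple.sort p) j ≤ t} = countLE p t :=
    card_equiv (Tuple.sort p) (by simp)
  rw [orderStat, ← Function.comp_apply (f := p), (Tuple.monotone_sort p).le_iff_lt_card_filter,
    hcount]

theorem rejCount_eq_stepDownIndex :
    rejCount m α p = stepDownIndex m fun j => countLE p (α j) := by
  refine congr_arg sSup <| Set.ext fun k => and_congr_right fun _ =>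
    ⟨fun h j hj1 hjk => ?_, fun h j hj => ?_⟩
  · obtain ⟨j, rfl⟩ := Nat.exists_eq_add_of_le' hj1
    exact (orderStat_le_iff p ⟨j, by omega⟩ _).1 (h ⟨j, by omega⟩ hjk)
  · exact (orderStat_le_iff p j _).2 (h (j + 1) (by omega) hj)

theorem rejCount_le : rejCount m α p ≤ m := by
  rw [rejCount_eq_stepDownIndex]
  exact stepDownIndex_le

theorem le_countLE_of_le_rejCount {k : ℕ} (hk1 : 1 ≤ k) (hk : k ≤ rejCount m α p) :
    k ≤ countLE p (α k) := by
  rw [rejCount_eq_stepDownIndex] at hk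
  exact le_of_le_stepDownIndex hk1 hk

/-- `K_i`: one more than the number of rejections of the step-down procedure with constants
`α 1, …, α (m - 1)` applied to the p-values other than `p i`. -/
noncomputable def looIndex (i : Fin m) : ℕ :=
  stepDownIndex (m - 1) (fun j => countLEErase p i (α j)) + 1

variable {α p} (i : Fin m)

theorem one_le_looIndex : 1 ≤ looIndex α p i := Nat.le_add_left _ _

theorem looIndex_le : looIndex α p i ≤ m := by
  have := i.pos
  have : stepDownIndex (m - 1) (fun j => countLEErase p i (α j)) ≤ m - 1 := stepDownIndex_le
  unfold looIndex
  omega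

theorem le_countLEErase_of_lt_looIndex {j : ℕ} (hj1 : 1 ≤ j) (hj : j < looIndex α p i) :
    j ≤ countLEErase p i (α j) :=
  le_of_le_stepDownIndex hj1 (Nat.lt_succ_iff.1 hj)

theorem countLEErase_lt_looIndex : countLEErase p i (α (looIndex α p i)) < looIndex α p i := by
  rcases (stepDownIndex_le (n := m - 1)
    (c := fun j => countLEErase p i (α j))).lt_or_eq with h | h
  · exact lt_of_stepDownIndex_lt h
  · have := countLEErase_le_card (p := p) i (t := α (looIndex α p i))
    rw [Fintype.card_fin] at this
    unfold looIndex at this ⊢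
    omega

theorem looIndex_sub_one_le (hα : MonotoneOn α (Set.Icc 1 m)) :
    looIndex α p i - 1 ≤ countLEErase p i (α (looIndex α p i)) := by
  have hK := looIndex_le (α := α) (p := p) i
  rcases Nat.lt_or_ge (looIndex α p i) 2 with h | h
  · omega
  calc looIndex α p i - 1 ≤ countLEErase p i (α (looIndex α p i - 1)) :=
        le_countLEErase_of_lt_looIndex i (by omega) (by omega)
    _ ≤ countLEErase p i (α (looIndex α p i)) :=
        countLEErase_mono i (hα ⟨by omega, by omega⟩ ⟨by omega, hK⟩ (by omega))

theorem looIndex_update (u : ℝ) : looIndex α (Function.update p i u) i = looIndex α p i := by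
  simp only [looIndex, countLEErase_update]

theorem le_alpha_looIndex_of_rejected (hα : MonotoneOn α (Set.Icc 1 m))
    (hR : 0 < rejCount m α p) (hpi : p i ≤ α (rejCount m α p)) : p i ≤ α (looIndex α p i) := by
  rcases le_or_gt (rejCount m α p) (looIndex α p i) with h | h
  · exact hpi.trans (hα ⟨hR, rejCount_le α p⟩ ⟨one_le_looIndex i, looIndex_le i⟩ h)
  by_contra! hlt
  have := le_countLE_of_le_rejCount α p (one_le_looIndex i) h.le
  rw [countLE_eq_countLEErase i hlt] at this
  exact (countLEErase_lt_looIndex i).not_ge this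

theorem looIndex_le_rejCount (hα : MonotoneOn α (Set.Icc 1 m))
    (hpi : p i ≤ α (looIndex α p i)) : looIndex α p i ≤ rejCount m α p := by
  rw [rejCount_eq_stepDownIndex, le_stepDownIndex_iff]
  refine ⟨looIndex_le i, fun k hk1 hkK => ?_⟩
  rcases hkK.lt_or_eq with hk | rfl
  · exact (le_countLEErase_of_lt_looIndex i hk1 hk).trans (countLEErase_le_countLE i)
  · rw [countLE_eq_countLEErase_add_one i hpi]
    have := looIndex_sub_one_le (p := p) i hα
    omega

theorem looIndex_le_of_alpha_lt {j : Fin m} (hj : α (looIndex α p j) < p j) :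
    looIndex α p i ≤ looIndex α p j := by
  by_contra! h
  have := (le_countLEErase_of_lt_looIndex i (one_le_looIndex j) h).trans
    (countLEErase_le_countLE i)
  rw [countLE_eq_countLEErase j hj] at this
  exact (countLEErase_lt_looIndex j).not_ge this

theorem card_alpha_looIndex_lt_le (hα : MonotoneOn α (Set.Icc 1 m)) :
    #{j | α (looIndex α p i) < p j} ≤ m + 1 - looIndex α p i := by
  have hsplit := card_filter_add_card_filter_not (s := univ) fun j => p j ≤ α (looIndex α p i)
  simp only [not_le, card_univ, Fintype.card_fin] at hsplit
  have := looIndex_sub_one_le (p := p) i hα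
  have := countLEErase_le_countLE (p := p) i (t := α (looIndex α p i))
  have := one_le_looIndex (α := α) (p := p) i
  unfold countLE at *
  omega

end Rejections

section Weights

variable {m : ℕ} (α : ℕ → ℝ) (i : Fin m)

noncomputable def fdpTerm (p : Fin m → ℝ) : ℝ≥0∞ :=
  if 0 < rejCount m α p ∧ p i ≤ α (rejCount m α p) then (rejCount m α p : ℝ≥0∞)⁻¹ else 0

noncomputable def looWeight (p : Fin m → ℝ) : ℝ≥0∞ :=
  if α (looIndex α p i) < p i then ((m + 1 - looIndex α p i : ℕ) : ℝ≥0∞)⁻¹ else 0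

noncomputable def fdp (I₀ : Finset (Fin m)) (p : Fin m → ℝ) : ℝ :=
  if 0 < rejCount m α p then (falseRejCount m α I₀ p : ℝ) / (rejCount m α p : ℝ) else 0

theorem fdpTerm_ne_top (p : Fin m → ℝ) : fdpTerm α i p ≠ ⊤ := by
  unfold fdpTerm
  split_ifs with h
  · exact ENNReal.inv_ne_top.2 (Nat.cast_ne_zero.2 h.1.ne')
  · exact ENNReal.zero_ne_top

theorem fdp_eq_toReal_sum (I₀ : Finset (Fin m)) (p : Fin m → ℝ) :
    fdp α I₀ p = (∑ i ∈ I₀, fdpTerm α i p).toReal := by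
  rw [ENNReal.toReal_sum fun i _ => fdpTerm_ne_top α i p, fdp, falseRejCount, card_filter]
  by_cases hR : 0 < rejCount m α p
  · simp only [hR, if_true, Nat.cast_sum, sum_div, fdpTerm, true_and]
    refine sum_congr rfl fun i _ => ?_
    split_ifs <;> simp
  · simp [hR, fdpTerm]

theorem sum_looWeight_le_one (hα : MonotoneOn α (Set.Icc 1 m)) (I₀ : Finset (Fin m))
    (p : Fin m → ℝ) : ∑ i ∈ I₀, looWeight α i p ≤ 1 := by
  simp only [looWeight, sum_ite, sum_const_zero, add_zero]
  set C := {i ∈ I₀ | α (looIndex α p i) < p i}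
  rcases C.eq_empty_or_nonempty with hC | ⟨i₀, hi₀⟩
  · simp [hC]
  have hK : ∀ i ∈ C, looIndex α p i = looIndex α p i₀ := fun i hi =>
    le_antisymm (looIndex_le_of_alpha_lt i (mem_filter.1 hi₀).2)
      (looIndex_le_of_alpha_lt i₀ (mem_filter.1 hi).2)
  have hcard : #C ≤ m + 1 - looIndex α p i₀ := by
    refine (card_le_card fun i hi => ?_).trans (card_alpha_looIndex_lt_le i₀ hα)
    simpa [← hK i hi] using (mem_filter.1 hi).2
  calc ∑ i ∈ C, ((m + 1 - looIndex α p i : ℕ) : ℝ≥0∞)⁻¹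
      = #C * ((m + 1 - looIndex α p i₀ : ℕ) : ℝ≥0∞)⁻¹ := by
        rw [sum_congr rfl fun i hi => by rw [hK i hi], sum_const, nsmul_eq_mul]
    _ ≤ (m + 1 - looIndex α p i₀ : ℕ) * ((m + 1 - looIndex α p i₀ : ℕ) : ℝ≥0∞)⁻¹ := by
        gcongr
    _ ≤ 1 := ENNReal.mul_inv_le_one _

theorem measurable_rejCount : Measurable (rejCount m α) := by
  rw [funext (rejCount_eq_stepDownIndex α)]
  exact measurable_stepDownIndex fun j => measurable_countLE (α j)

theorem measurable_looIndex : Measurable fun p : Fin m → ℝ => looIndex α p i :=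
  (measurable_stepDownIndex fun j => measurable_countLEErase i (α j)).add_const 1

theorem measurable_fdpTerm : Measurable (fdpTerm α i) :=
  measurable_comp_countable (N := rejCount m α)
    (F := fun (p : Fin m → ℝ) (r : ℕ) => if 0 < r ∧ p i ≤ α r then (r : ℝ≥0∞)⁻¹ else 0)
    (fun _ => Measurable.ite
      ((MeasurableSet.const _).inter (measurableSet_le (measurable_pi_apply i) measurable_const))
      measurable_const measurable_const)
    (measurable_rejCount α)

theorem measurable_looWeight : Measurable (looWeight α i) :=
  measurable_comp_countable (N := fun p => looIndex α p i)
    (F := fun (p : Fin m → ℝ) (r : ℕ) => if α r < p i then ((m + 1 - r : ℕ) : ℝ≥0∞)⁻¹ else 0)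
    (fun _ => Measurable.ite (measurableSet_lt measurable_const (measurable_pi_apply i))
      measurable_const measurable_const)
    (measurable_looIndex α i)

end Weights

section Integration

variable {m : ℕ} {α : ℕ → ℝ} (i : Fin m)

theorem fdpTerm_update_le (hα : MonotoneOn α (Set.Icc 1 m)) (x : Fin m → ℝ) (u : ℝ) :
    fdpTerm α i (Function.update x i u) ≤
      (Set.Iic (α (looIndex α x i))).indicator (fun _ => (looIndex α x i : ℝ≥0∞)⁻¹) u := by
  unfold fdpTerm
  split_ifs with h
  · have hu := le_alpha_looIndex_of_rejected i hα h.1 h.2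
    have hK := looIndex_le_rejCount i hα hu
    rw [looIndex_update] at hu hK
    rw [Function.update_self] at hu
    rw [Set.indicator_of_mem (Set.mem_Iic.2 hu)]
    exact ENNReal.inv_le_inv.2 (by exact_mod_cast hK)
  · exact zero_le

theorem looWeight_update (x : Fin m → ℝ) (u : ℝ) :
    looWeight α i (Function.update x i u) =
      (Set.Ioi (α (looIndex α x i))).indicator
        (fun _ => ((m + 1 - looIndex α x i : ℕ) : ℝ≥0∞)⁻¹) u := by
  simp only [looWeight, looIndex_update, Function.update_self, Set.indicator, Set.mem_Ioi]

variable {q : ℝ}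
  (hα : MonotoneOn α (Set.Icc 1 m))
  (hαrange : ∀ i : ℕ, 1 ≤ i → i ≤ m → 0 ≤ α i ∧ α i < 1)
  (hαcond : ∀ i : ℕ, 1 ≤ i → i ≤ m →
    α i / (1 - α i) ≤ (i : ℝ) * q / ((m : ℝ) + 1 - (i : ℝ)))
include hα hαrange hαcond

theorem lintegral_fdpTerm_update_le (x : Fin m → ℝ) :
    ∫⁻ u in Set.Icc 0 1, fdpTerm α i (Function.update x i u) ≤
      ENNReal.ofReal q * ∫⁻ u in Set.Icc 0 1, looWeight α i (Function.update x i u) := by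
  have hle := fdpTerm_update_le i hα x
  simp_rw [looWeight_update]
  have hK1 := one_le_looIndex (α := α) (p := x) i
  have hKm := looIndex_le (α := α) (p := x) i
  generalize looIndex α x i = K at *
  obtain ⟨hα0, hα1⟩ := hαrange K hK1 hKm
  have hcond : α K / (1 - α K) ≤ K * q / (m + 1 - K : ℕ) := by
    rw [Nat.cast_sub (by omega)]
    push_cast
    exact hαcond K hK1 hKm
  calc ∫⁻ u in Set.Icc 0 1, fdpTerm α i (Function.update x i u)
      ≤ ∫⁻ u in Set.Icc 0 1, (Set.Iic (α K)).indicator (fun _ => (K : ℝ≥0∞)⁻¹) u :=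
        lintegral_mono hle
    _ = (K : ℝ≥0∞)⁻¹ * ENNReal.ofReal (α K) := by
        rw [lintegral_indicator_const measurableSet_Iic, restrict_Icc_zero_one_Iic hα1.le]
    _ ≤ ENNReal.ofReal q * (((m + 1 - K : ℕ) : ℝ≥0∞)⁻¹ * ENNReal.ofReal (1 - α K)) :=
        inv_mul_ofReal_le_of_div_le hα0 hα1 hK1 (by omega) hcond
    _ = _ := by
        rw [lintegral_indicator_const measurableSet_Ioi, restrict_Icc_zero_one_Ioi hα0]

theorem lintegral_fdpTerm_le {ν : Fin m → Measure ℝ} [∀ i, SigmaFinite (ν i)]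
    (hi : ν i = volume.restrict (Set.Icc 0 1)) :
    ∫⁻ p, fdpTerm α i p ∂Measure.pi ν ≤
      ENNReal.ofReal q * ∫⁻ p, looWeight α i p ∂Measure.pi ν := by
  rw [← lintegral_const_mul _ (measurable_looWeight α i)]
  refine lintegral_pi_le_of_update_le (measurable_fdpTerm α i)
    ((measurable_looWeight α i).const_mul _) i fun x => ?_
  rw [hi, lintegral_const_mul _ (f := fun u => looWeight α i (Function.update x i u))
    ((measurable_looWeight α i).comp (measurable_update x))]
  exact lintegral_fdpTerm_update_le i hα hαrange hαcond x

theorem lintegral_sum_fdpTerm_le {ν : Fin m → Measure ℝ} [∀ i, IsProbabilityMeasure (ν i)]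
    {I₀ : Finset (Fin m)} (hunif : ∀ i ∈ I₀, ν i = volume.restrict (Set.Icc 0 1)) :
    ∫⁻ p, ∑ i ∈ I₀, fdpTerm α i p ∂Measure.pi ν ≤ ENNReal.ofReal q :=
  calc ∫⁻ p, ∑ i ∈ I₀, fdpTerm α i p ∂Measure.pi ν
      = ∑ i ∈ I₀, ∫⁻ p, fdpTerm α i p ∂Measure.pi ν :=
        lintegral_finsetSum _ fun i _ => measurable_fdpTerm α i
    _ ≤ ∑ i ∈ I₀, ENNReal.ofReal q * ∫⁻ p, looWeight α i p ∂Measure.pi ν :=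
        sum_le_sum fun i hi => lintegral_fdpTerm_le i hα hαrange hαcond (hunif i hi)
    _ = ENNReal.ofReal q * ∫⁻ p, ∑ i ∈ I₀, looWeight α i p ∂Measure.pi ν := by
        rw [← mul_sum, lintegral_finsetSum _ fun i _ => measurable_looWeight α i]
    _ ≤ ENNReal.ofReal q * ∫⁻ _, 1 ∂Measure.pi ν := by
        gcongr with p
        exact sum_looWeight_le_one α hα I₀ p
    _ = ENNReal.ofReal q := by simp

end Integration

end StepDown

open StepDown

theorem stmt_11_general {Ω : Type*} [MeasurableSpace Ω] (μ : Measure Ω) [IsProbabilityMeasure μ]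
    (m : ℕ) (q : ℝ) (hq0 : 0 < q)
    (P : Fin m → Ω → ℝ) (hmeas : ∀ i, Measurable (P i))
    (hindep : iIndepFun P μ)
    (I₀ : Finset (Fin m))
    (hunif : ∀ i ∈ I₀, μ.map (P i) = volume.restrict (Set.Icc (0 : ℝ) 1))
    (α : ℕ → ℝ)
    (hαrange : ∀ i : ℕ, 1 ≤ i → i ≤ m → 0 ≤ α i ∧ α i < 1)
    (hαmono : ∀ a b : ℕ, 1 ≤ a → a ≤ b → b ≤ m → α a ≤ α b)
    (hαcond : ∀ i : ℕ, 1 ≤ i → i ≤ m →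
      α i / (1 - α i) ≤ (i : ℝ) * q / ((m : ℝ) + 1 - (i : ℝ))) :
    FDR μ m α I₀ P ≤ q := by
  have hα : MonotoneOn α (Set.Icc 1 m) := fun a ha b hb hab => hαmono a b ha.1 hab hb.2
  have hP : Measurable fun ω i => P i ω := measurable_pi_lambda _ hmeas
  have hsum : Measurable fun p => ∑ i ∈ I₀, fdpTerm α i p :=
    Finset.measurable_sum _ fun i _ => measurable_fdpTerm α i
  have (i : Fin m) : IsProbabilityMeasure (μ.map (P i)) :=
    Measure.isProbabilityMeasure_map (hmeas i).aemeasurable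
  calc FDR μ m α I₀ P = ∫ ω, fdp α I₀ (fun i => P i ω) ∂μ := rfl
    _ = (∫⁻ ω, ∑ i ∈ I₀, fdpTerm α i (fun j => P j ω) ∂μ).toReal := by
        simp_rw [fdp_eq_toReal_sum]
        exact integral_toReal (hsum.comp hP).aemeasurable (ae_of_all _ fun ω =>
          ENNReal.sum_lt_top.2 fun i _ => (fdpTerm_ne_top α i _).lt_top)
    _ = (∫⁻ p, ∑ i ∈ I₀, fdpTerm α i p ∂Measure.pi fun i => μ.map (P i)).toReal := by
        rw [← hindep.map_fun_eq_pi_map fun i => (hmeas i).aemeasurable, lintegral_map hsum hP]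
    _ ≤ q := ENNReal.toReal_le_of_le_ofReal hq0.le
        (lintegral_sum_fdpTerm_le hα hαrange hαcond hunif)

/-- Theorem 1.1: for independent p-values, uniform on [0,1] under the true nulls,
the step-down procedure with critical values α_1 ≤ … ≤ α_m ∈ [0,1) satisfying
α_i/(1-α_i) ≤ iq/(m+1-i) controls the FDR at level q. -/
theorem stmt_11 {Ω : Type*} [MeasurableSpace Ω] (μ : Measure Ω) [IsProbabilityMeasure μ]
    (m : ℕ) (hm : 1 ≤ m) (q : ℝ) (hq0 : 0 < q) (hq1 : q < 1)
    (P : Fin m → Ω → ℝ) (hmeas : ∀ i, Measurable (P i))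
    (hrange : ∀ i ω, P i ω ∈ Set.Icc (0 : ℝ) 1)
    (hindep : iIndepFun P μ)
    (I₀ : Finset (Fin m))
    (hunif : ∀ i ∈ I₀, μ.map (P i) = volume.restrict (Set.Icc (0 : ℝ) 1))
    (α : ℕ → ℝ)
    (hαrange : ∀ i : ℕ, 1 ≤ i → i ≤ m → 0 ≤ α i ∧ α i < 1)
    (hαmono : ∀ a b : ℕ, 1 ≤ a → a ≤ b → b ≤ m → α a ≤ α b)
    (hαcond : ∀ i : ℕ, 1 ≤ i → i ≤ m →
      α i / (1 - α i) ≤ (i : ℝ) * q / ((m : ℝ) + 1 - (i : ℝ))) :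
    FDR μ m α I₀ P ≤ q :=
  stmt_11_general μ m q hq0 P hmeas hindep I₀ hunif α hαrange hαmono hαcond
end

section
/- If α_i/(1-α_i) = iq/(m-i+β_m) with β_m ≥ m(1-q) and the p-values are PRDS on the set of null p-values, each null p-value stochastically dominated by Uniform[0,1], then the step-down procedure with these critical values has FDR ≤ m_0 q/(β_m + mq) ≤ q, where m_0 = |I_0|. -/
open MeasureTheory ProbabilityTheory

/-!
With `c = q / (β + m q)` the critical values satisfy `α_r ≤ c r`, so the false discovery
proportion is at most `∑_{i ∈ I₀} 1{P_i ≤ c R} / R`, and it suffices to show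
`E[1{X ≤ c R} / R; R > 0] ≤ c` for every null p-value `X`. The number of rejections `R` is
antitone in the p-values, so PRDS makes `P(R ≤ k | X ≤ t)` nondecreasing in `t`. Splitting
`{R = k} = {R ≤ k} \ {R ≤ k - 1}`, the `k`-th term is at most `P(X ≤ c k) / k · (a_k - a_{k-1})`
with `a_k = P(R ≤ k | X ≤ c k)`; since `P(X ≤ c k) ≤ c k`, the sum telescopes to at most `c`.
-/

section StepDown

open Finset

lemma orderStat_le_iff {m : ℕ} (p : Fin m → ℝ) (k : Fin m) (t : ℝ) :
    orderStat p k ≤ t ↔ (k : ℕ) + 1 ≤ #{i | p i ≤ t} := by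
  have hcard : #{j | orderStat p j ≤ t} = #{i | p i ≤ t} := by
    refine card_equiv (Tuple.sort p) fun i => ?_
    simp only [mem_filter, mem_univ, true_and]
    rfl
  rw [← hcard]
  constructor
  · intro h
    calc (k : ℕ) + 1 = #(Iic k) := (Fin.card_Iic k).symm
      _ ≤ _ := card_le_card fun j hj =>
        mem_filter.2 ⟨mem_univ j, (Tuple.monotone_sort p (mem_Iic.1 hj)).trans h⟩
  · intro h
    by_contra hlt
    have hsub : ({j | orderStat p j ≤ t} : Finset (Fin m)) ⊆ Iio k := fun j hj => by
      by_contra hjk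
      exact hlt ((Tuple.monotone_sort p (not_lt.1 (mt mem_Iio.2 hjk))).trans (mem_filter.1 hj).2)
    have := card_le_card hsub
    rw [Fin.card_Iio] at this
    omega

lemma orderStat_mono {m : ℕ} {p p' : Fin m → ℝ} (h : p ≤ p') (k : Fin m) :
    orderStat p k ≤ orderStat p' k := by
  rw [orderStat_le_iff]
  exact ((orderStat_le_iff p' k _).1 le_rfl).trans
    (card_le_card fun i hi => mem_filter.2 ⟨mem_univ i, (h i).trans (mem_filter.1 hi).2⟩)

lemma measurable_orderStat {m : ℕ} (k : Fin m) :
    Measurable fun p : Fin m → ℝ => orderStat p k := by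
  refine measurable_of_Iic fun t => ?_
  have : (fun p : Fin m → ℝ => orderStat p k) ⁻¹' Set.Iic t
      = ⋃ S ∈ (univ : Finset (Fin m)).powersetCard ((k : ℕ) + 1), ⋂ i ∈ S, {p | p i ≤ t} := by
    ext p
    simp only [Set.mem_preimage, Set.mem_Iic, orderStat_le_iff, Set.mem_iUnion, Set.mem_iInter,
      mem_powersetCard, Set.mem_ofPred_eq, exists_prop]
    constructor
    · intro h
      obtain ⟨S, hS, hcard⟩ := exists_subset_card_eq h
      exact ⟨S, ⟨subset_univ S, hcard⟩, fun i hi => (mem_filter.1 (hS hi)).2⟩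
    · rintro ⟨S, ⟨-, hcard⟩, hS⟩
      exact hcard ▸ card_le_card fun i hi => mem_filter.2 ⟨mem_univ i, hS i hi⟩
  rw [this]
  exact .biUnion (countable_toSet _) fun S _ => .biInter (countable_toSet _)
    fun i _ => measurableSet_le (measurable_pi_apply i) measurable_const

variable {m : ℕ} {α : ℕ → ℝ}

lemma le_rejCount_iff {p : Fin m → ℝ} {i : ℕ} :
    i ≤ rejCount m α p ↔ i ≤ m ∧ ∀ j : Fin m, (j : ℕ) < i → orderStat p j ≤ α ((j : ℕ) + 1) := by
  have hbdd : BddAbove {i : ℕ | i ≤ m ∧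
      ∀ j : Fin m, (j : ℕ) < i → orderStat p j ≤ α ((j : ℕ) + 1)} := ⟨m, fun i hi => hi.1⟩
  refine ⟨fun h => ?_, fun h => le_csSup hbdd h⟩
  obtain ⟨hR, hRj⟩ :=
    Nat.sSup_mem (by exact ⟨0, Nat.zero_le m, fun j hj => absurd hj (by omega)⟩) hbdd
  exact ⟨h.trans hR, fun j hj => hRj j (hj.trans_le h)⟩

lemma rejCount_le (p : Fin m → ℝ) : rejCount m α p ≤ m :=
  (le_rejCount_iff.1 le_rfl).1

lemma rejCount_antitone : Antitone (rejCount m α) := fun p p' h => by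
  obtain ⟨hm, hj⟩ := le_rejCount_iff.1 (le_refl (rejCount m α p'))
  exact le_rejCount_iff.2 ⟨hm, fun j hjR => (orderStat_mono h j).trans (hj j hjR)⟩

lemma monotone_indicator_rejCount_le (k : ℕ) :
    Monotone ({p : Fin m → ℝ | rejCount m α p ≤ k}.indicator (1 : (Fin m → ℝ) → ℝ)) := by
  intro p p' h
  by_cases hp : rejCount m α p ≤ k
  · simp [hp, (rejCount_antitone h).trans hp]
  · simp only [Set.indicator_apply, Set.mem_ofPred_eq, hp, if_false]
    split_ifs <;> norm_num

lemma measurable_rejCount : Measurable (rejCount m α) := by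
  have hge : ∀ i, MeasurableSet {p : Fin m → ℝ | i ≤ rejCount m α p} := fun i => by
    simp only [le_rejCount_iff, Set.ofPred_and, Set.ofPred_forall]
    exact (MeasurableSet.const _).inter (.iInter fun j => .iInter fun _ =>
      measurableSet_le (measurable_orderStat j) measurable_const)
  refine measurable_to_countable' fun r => ?_
  convert (hge r).diff (hge (r + 1)) using 1
  ext p
  simp only [Set.mem_preimage, Set.mem_singleton_iff, Set.mem_sdiff, Set.mem_ofPred_eq]
  omega

lemma fdp_le_sum_inv {c : ℝ} (I₀ : Finset (Fin m)) (hαc : ∀ r, 1 ≤ r → r ≤ m → α r ≤ c * r)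
    (p : Fin m → ℝ) :
    (if 0 < rejCount m α p then (falseRejCount m α I₀ p : ℝ) / rejCount m α p else 0) ≤
      ∑ i ∈ I₀, if 0 < rejCount m α p ∧ p i ≤ c * rejCount m α p then
        (rejCount m α p : ℝ)⁻¹ else 0 := by
  split_ifs with hR
  · rw [falseRejCount, card_filter, Nat.cast_sum, sum_div]
    refine sum_le_sum fun i _ => ?_
    by_cases hp : p i ≤ α (rejCount m α p)
    · rw [if_pos hp, if_pos ⟨hR, hp.trans (hαc _ hR (rejCount_le p))⟩, Nat.cast_one, one_div]
    · rw [if_neg hp, Nat.cast_zero, zero_div]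
      split_ifs <;> positivity
  · exact sum_nonneg fun i _ => by simp [hR]

end StepDown

lemma critical_value_le {m r : ℕ} {q β a : ℝ} (hq1 : q ≤ 1) (hβ : (m : ℝ) * (1 - q) ≤ β)
    (hrm : r ≤ m) (ha0 : 0 < a) (ha1 : a < 1)
    (ha : a / (1 - a) = r * q / (m - r + β)) :
    a ≤ q / (β + m * q) * r := by
  have hrm' : (r : ℝ) ≤ m := by exact_mod_cast hrm
  have hpos : 0 < r * q / (m - r + β) := ha ▸ div_pos ha0 (sub_pos.2 ha1)
  obtain ⟨hrq, hB⟩ : 0 < r * q ∧ 0 < m - r + β := by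
    refine (div_pos_iff.1 hpos).resolve_right fun h => ?_
    nlinarith [h.1, h.2, r.cast_nonneg (α := ℝ)]
  have hsolve : a * (m - r + β + r * q) = r * q := by
    rw [div_eq_div_iff (sub_pos.2 ha1).ne' hB.ne'] at ha
    linarith
  have hden : 0 < β + m * q := by nlinarith [r.cast_nonneg (α := ℝ)]
  rw [div_mul_eq_mul_div, le_div_iff₀ hden]
  nlinarith [mul_le_mul_of_nonneg_left (show ((m : ℝ) - r) * q ≤ m - r by nlinarith) ha0.le]

open Finset in
lemma sum_range_div_le_of_ratio_mono {m : ℕ} {c : ℝ} (hc : 0 ≤ c) {F G H : ℕ → ℝ}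
    (hF0 : ∀ k, 0 ≤ F k) (hF : ∀ k, F k ≤ F (k + 1)) (hFc : ∀ k : ℕ, F (k + 1) ≤ c * (k + 1))
    (hG0 : ∀ k, 0 ≤ G k) (hGF : ∀ k, G k ≤ F k) (hH0 : ∀ k, 0 ≤ H k)
    (hHG : ∀ k, H k ≤ G (k + 1)) (hratio : ∀ k, G k * F (k + 1) ≤ H k * F k) :
    ∑ k ∈ range m, (G (k + 1) - H k) / (k + 1) ≤ c := by
  -- `G k / F k` plays the role of `a_k`: each term is at most `c` times its increment.
  have hterm : ∀ k : ℕ,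
      (G (k + 1) - H k) / (k + 1) ≤ c * (G (k + 1) / F (k + 1) - G k / F k) := fun k => by
    have hk : (0 : ℝ) < k + 1 := k.cast_add_one_pos
    rcases (hF0 (k + 1)).eq_or_lt with hzero | hpos
    · have hFk : F k = 0 := le_antisymm (hzero ▸ hF k) (hF0 k)
      rw [← hzero, hFk, div_zero, div_zero, sub_zero, mul_zero]
      exact div_nonpos_of_nonpos_of_nonneg (by linarith [hGF (k + 1), hH0 k]) hk.le
    have hlow : G k / F k ≤ H k / F (k + 1) := by
      rcases (hF0 k).eq_or_lt with hFk | hFk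
      · rw [← hFk, div_zero]
        exact div_nonneg (hH0 k) hpos.le
      · rw [div_le_div_iff₀ hFk hpos]
        exact hratio k
    calc (G (k + 1) - H k) / (k + 1)
        = F (k + 1) / (k + 1) * ((G (k + 1) - H k) / F (k + 1)) := by field_simp
      _ ≤ c * ((G (k + 1) - H k) / F (k + 1)) := by
        gcongr
        · exact div_nonneg (sub_nonneg.2 (hHG k)) hpos.le
        · rw [div_le_iff₀ hk]
          exact hFc k
      _ ≤ c * (G (k + 1) / F (k + 1) - G k / F k) := by
        rw [sub_div]
        gcongr
  calc ∑ k ∈ range m, (G (k + 1) - H k) / (k + 1)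
      ≤ ∑ k ∈ range m, c * (G (k + 1) / F (k + 1) - G k / F k) := sum_le_sum fun k _ => hterm k
    _ = c * (G m / F m - G 0 / F 0) := by
      rw [← mul_sum, sum_range_sub (fun k => G k / F k)]
    _ ≤ c * 1 := by
      gcongr
      linarith [div_le_one_of_le₀ (hGF m) (hF0 m), div_nonneg (hG0 0) (hF0 0)]
    _ = c := mul_one c

open Set in
lemma ite_inv_eq_sum_indicator {Ω : Type*} {X : Ω → ℝ} {R : Ω → ℕ} {m : ℕ} {c : ℝ}
    (hRm : ∀ ω, R ω ≤ m) (ω : Ω) :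
    (if 0 < R ω ∧ X ω ≤ c * R ω then (R ω : ℝ)⁻¹ else 0) =
      ∑ k ∈ Finset.range m, ({ω | R ω = k + 1} ∩ X ⁻¹' Iic (c * (k + 1 : ℕ))).indicator
        (fun _ => ((k : ℝ) + 1)⁻¹) ω := by
  rcases (R ω).eq_zero_or_pos with h0 | hpos
  · simp [h0]
  obtain ⟨j, hj⟩ := Nat.exists_eq_add_one.2 hpos
  have hjm : j ∈ Finset.range m := Finset.mem_range.2 (by have := hRm ω; omega)
  rw [Finset.sum_eq_single_of_mem j hjm fun k _ hkj => indicator_of_notMem (fun h => hkj ?_) _]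
  · simp [Set.indicator, hj]
  · simp only [mem_inter_iff, mem_ofPred_eq, hj] at h
    omega

section ConditionalMonotone

open Set

variable {Ω : Type*} [MeasurableSpace Ω] {μ : Measure Ω} [IsFiniteMeasure μ] {X : Ω → ℝ}

lemma setIntegral_preimage_Iic_mul_le (hX : Measurable X) {e : ℝ → ℝ} (he : Monotone e)
    (hint : Integrable (fun ω => e (X ω)) μ) {s t : ℝ} (hst : s ≤ t) :
    (∫ ω in X ⁻¹' Iic s, e (X ω) ∂μ) * μ.real (X ⁻¹' Iic t) ≤
      (∫ ω in X ⁻¹' Iic t, e (X ω) ∂μ) * μ.real (X ⁻¹' Iic s) := by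
  have hunion : X ⁻¹' Iic t = X ⁻¹' Iic s ∪ X ⁻¹' Ioc s t := by
    rw [← preimage_union, Iic_union_Ioc_eq_Iic hst]
  have hdisj : Disjoint (X ⁻¹' Iic s) (X ⁻¹' Ioc s t) :=
    (Iic_disjoint_Ioc le_rfl).preimage X
  have hbelow : ∫ ω in X ⁻¹' Iic s, e (X ω) ∂μ ≤ μ.real (X ⁻¹' Iic s) * e s := by
    rw [← smul_eq_mul, ← setIntegral_const]
    exact setIntegral_mono_on hint.integrableOn (integrableOn_const) (hX measurableSet_Iic)
      fun ω hω => he hω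
  have habove : μ.real (X ⁻¹' Ioc s t) * e s ≤ ∫ ω in X ⁻¹' Ioc s t, e (X ω) ∂μ := by
    rw [← smul_eq_mul, ← setIntegral_const]
    exact setIntegral_mono_on (integrableOn_const) hint.integrableOn (hX measurableSet_Ioc)
      fun ω hω => he hω.1.le
  rw [hunion, setIntegral_union hdisj (hX measurableSet_Ioc) hint.integrableOn hint.integrableOn,
    measureReal_union hdisj (hX measurableSet_Ioc)]
  nlinarith [mul_le_mul_of_nonneg_right hbelow (measureReal_nonneg (μ := μ) (s := X ⁻¹' Ioc s t)),
    mul_le_mul_of_nonneg_left habove (measureReal_nonneg (μ := μ) (s := X ⁻¹' Iic s))]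

variable {A : Set Ω} {e : ℝ → ℝ}

lemma measureReal_inter_preimage_eq_setIntegral (hX : Measurable X) (hA : MeasurableSet A)
    (hce : (fun ω => e (X ω)) =ᵐ[μ] μ[A.indicator 1 | MeasurableSpace.comap X inferInstance])
    {B : Set ℝ} (hB : MeasurableSet B) :
    μ.real (A ∩ X ⁻¹' B) = ∫ ω in X ⁻¹' B, e (X ω) ∂μ := by
  rw [setIntegral_congr_ae (hX hB) (hce.mono fun ω h _ => h),
    setIntegral_condExp hX.comap_le ((integrable_const 1).indicator hA) ⟨B, hB, rfl⟩,
    integral_indicator_one hA, measureReal_restrict_apply hA]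

lemma measureReal_inter_Iic_mul_le_of_monotone_condExp (hX : Measurable X)
    (hA : MeasurableSet A) (he : Monotone e)
    (hce : (fun ω => e (X ω)) =ᵐ[μ] μ[A.indicator 1 | MeasurableSpace.comap X inferInstance])
    {s t : ℝ} (hst : s ≤ t) :
    μ.real (A ∩ X ⁻¹' Iic s) * μ.real (X ⁻¹' Iic t) ≤
      μ.real (A ∩ X ⁻¹' Iic t) * μ.real (X ⁻¹' Iic s) := by
  rw [measureReal_inter_preimage_eq_setIntegral hX hA hce measurableSet_Iic,
    measureReal_inter_preimage_eq_setIntegral hX hA hce measurableSet_Iic]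
  exact setIntegral_preimage_Iic_mul_le hX he (integrable_condExp.congr hce.symm) hst

lemma integrable_ite_inv {R : Ω → ℕ} {c : ℝ} (hX : Measurable X) (hR : Measurable R) :
    Integrable (fun ω => if 0 < R ω ∧ X ω ≤ c * R ω then (R ω : ℝ)⁻¹ else 0) μ := by
  refine .of_bound (Measurable.aestronglyMeasurable ?_) 1 (ae_of_all _ fun ω => ?_)
  · exact Measurable.ite ((hR measurableSet_Ioi).inter (measurableSet_le hX (by fun_prop)))
      (by fun_prop) measurable_const
  · split_ifs with h
    · rw [norm_inv, Real.norm_natCast]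
      exact inv_le_one_of_one_le₀ (by exact_mod_cast h.1)
    · simp

lemma measureReal_eq_add_one_inter {R : Ω → ℕ} (hR : Measurable R) {B : Set Ω}
    (hB : MeasurableSet B) (k : ℕ) :
    μ.real ({ω | R ω = k + 1} ∩ B) =
      μ.real ({ω | R ω ≤ k + 1} ∩ B) - μ.real ({ω | R ω ≤ k} ∩ B) := by
  have hsub : {ω | R ω ≤ k} ⊆ {ω | R ω ≤ k + 1} := fun ω (h : R ω ≤ k) => h.trans k.le_succ
  rw [← measureReal_sdiff (inter_subset_inter_left B hsub) ((hR measurableSet_Iic).inter hB)]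
  congr 1
  ext ω
  simp only [mem_inter_iff, mem_sdiff, mem_ofPred_eq]
  constructor
  · rintro ⟨hRk, hω⟩
    exact ⟨⟨hRk.le, hω⟩, fun h => by omega⟩
  · rintro ⟨⟨hRk, hω⟩, hn⟩
    exact ⟨by_contra fun h => hn ⟨by omega, hω⟩, hω⟩

lemma integral_ite_inv_le_of_monotone_condExp {R : Ω → ℕ} {m : ℕ} {c : ℝ} (hc : 0 ≤ c)
    (hX : Measurable X)
    (hXunif : ∀ t : ℝ, 0 ≤ t → μ {ω | X ω ≤ t} ≤ ENNReal.ofReal t)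
    (hR : Measurable R) (hRm : ∀ ω, R ω ≤ m)
    (hPRDS : ∀ k : ℕ, ∃ e : ℝ → ℝ, Monotone e ∧ (fun ω => e (X ω)) =ᵐ[μ]
      μ[{ω | R ω ≤ k}.indicator 1 | MeasurableSpace.comap X inferInstance]) :
    ∫ ω, (if 0 < R ω ∧ X ω ≤ c * R ω then (R ω : ℝ)⁻¹ else 0) ∂μ ≤ c := by
  have hle : ∀ k : ℕ, MeasurableSet {ω | R ω ≤ k} := fun k => hR measurableSet_Iic
  have heq : ∀ k : ℕ, MeasurableSet {ω | R ω = k} := fun k => hR (measurableSet_singleton k)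
  have hIic : ∀ t, MeasurableSet (X ⁻¹' Iic t) := fun t => hX measurableSet_Iic
  rw [integral_congr_ae (Filter.Eventually.of_forall (ite_inv_eq_sum_indicator hRm)),
    integral_finsetSum _ fun k _ => (integrable_const _).indicator ((heq _).inter (hIic _))]
  simp_rw [integral_indicator_const _ ((heq _).inter (hIic _)), smul_eq_mul, ← div_eq_mul_inv,
    measureReal_eq_add_one_inter hR (hIic _)]
  refine sum_range_div_le_of_ratio_mono (F := fun j : ℕ => μ.real (X ⁻¹' Iic (c * j)))
    (G := fun j : ℕ => μ.real ({ω | R ω ≤ j} ∩ X ⁻¹' Iic (c * j)))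
    (H := fun k : ℕ => μ.real ({ω | R ω ≤ k} ∩ X ⁻¹' Iic (c * (k + 1 : ℕ))))
    hc (fun _ => measureReal_nonneg) (fun k => ?_) (fun k => ?_) (fun _ => measureReal_nonneg)
    (fun _ => measureReal_mono inter_subset_right) (fun _ => measureReal_nonneg)
    (fun k => measureReal_mono (inter_subset_inter_left _
      (show {ω | R ω ≤ k} ⊆ {ω | R ω ≤ k + 1} from fun ω (h : R ω ≤ k) => h.trans k.le_succ)))
    (fun k => ?_)
  · exact measureReal_mono (preimage_mono (Iic_subset_Iic.2
      (mul_le_mul_of_nonneg_left (by simp) hc)))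
  · rw [measureReal_def]
    exact_mod_cast ENNReal.toReal_le_of_le_ofReal (by positivity)
      (hXunif (c * (k + 1 : ℕ)) (by positivity))
  · obtain ⟨e, he, hce⟩ := hPRDS k
    exact measureReal_inter_Iic_mul_le_of_monotone_condExp hX (hle k) he hce
      (mul_le_mul_of_nonneg_left (by simp) hc)

end ConditionalMonotone

theorem stmt_16_general {Ω : Type*} [MeasurableSpace Ω] (μ : Measure Ω) [IsProbabilityMeasure μ]
    (m : ℕ) (q : ℝ) (hq0 : 0 < q) (hq1 : q < 1)
    (β : ℝ) (hβ : (m : ℝ) * (1 - q) ≤ β)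
    (P : Fin m → Ω → ℝ) (hmeas : ∀ i, Measurable (P i))
    (I₀ : Finset (Fin m))
    (hnull : ∀ i ∈ I₀, ∀ t : ℝ, 0 ≤ t → μ {ω | P i ω ≤ t} ≤ ENNReal.ofReal t)
    (hPRDS : ∀ i ∈ I₀, ∀ φ : (Fin m → ℝ) → ℝ, Measurable φ → Monotone φ →
      (∀ p, |φ p| ≤ 1) →
      ∃ h : ℝ → ℝ, Monotone h ∧
        (fun ω => h (P i ω)) =ᵐ[μ]
          μ[(fun ω => φ (fun k => P k ω)) | MeasurableSpace.comap (P i) inferInstance])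
    (α : ℕ → ℝ)
    (hα : ∀ i : ℕ, 1 ≤ i → i ≤ m →
      (0 < α i ∧ α i < 1) ∧
        α i / (1 - α i) = (i : ℝ) * q / ((m : ℝ) - (i : ℝ) + β)) :
    FDR μ m α I₀ P ≤ (I₀.card : ℝ) * q / (β + (m : ℝ) * q) ∧
      (I₀.card : ℝ) * q / (β + (m : ℝ) * q) ≤ q := by
  have hcard : (I₀.card : ℝ) ≤ m := by exact_mod_cast I₀.card_le_univ.trans_eq (Fintype.card_fin m)
  have hden : (m : ℝ) ≤ β + m * q := by linarith
  set c := q / (β + m * q)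
  have hc : 0 ≤ c := div_nonneg hq0.le ((m.cast_nonneg).trans hden)
  have hαc : ∀ r, 1 ≤ r → r ≤ m → α r ≤ c * r := fun r hr1 hrm =>
    critical_value_le hq1.le hβ hrm (hα r hr1 hrm).1.1 (hα r hr1 hrm).1.2 (hα r hr1 hrm).2
  set R : Ω → ℕ := fun ω => rejCount m α fun k => P k ω
  have hR : Measurable R := measurable_rejCount.comp (measurable_pi_lambda _ hmeas)
  set ψ : Fin m → Ω → ℝ := fun i ω => if 0 < R ω ∧ P i ω ≤ c * R ω then (R ω : ℝ)⁻¹ else 0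
  have hRle : ∀ i ∈ I₀, ∀ k : ℕ, ∃ e : ℝ → ℝ, Monotone e ∧ (fun ω => e (P i ω)) =ᵐ[μ]
      μ[{ω | R ω ≤ k}.indicator 1 | MeasurableSpace.comap (P i) inferInstance] := fun i hi k =>
    hPRDS i hi _ (measurable_one.indicator (measurable_rejCount measurableSet_Iic))
      (monotone_indicator_rejCount_le k) fun p => by
        by_cases hp : rejCount m α p ≤ k <;> simp [hp]
  have hψ : ∀ i ∈ I₀, ∫ ω, ψ i ω ∂μ ≤ c := fun i hi =>
    integral_ite_inv_le_of_monotone_condExp hc (hmeas i) (hnull i hi) hR (fun _ => rejCount_le _)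
      (hRle i hi)
  have hψint : ∀ i, Integrable (ψ i) μ := fun i => integrable_ite_inv (hmeas i) hR
  refine ⟨?_, div_le_of_le_mul₀ ((m.cast_nonneg).trans hden) hq0.le (by nlinarith)⟩
  calc FDR μ m α I₀ P ≤ ∫ ω, ∑ i ∈ I₀, ψ i ω ∂μ :=
        integral_mono_of_nonneg (ae_of_all _ fun ω => by dsimp only; split_ifs <;> positivity)
          (integrable_finsetSum _ fun i _ => hψint i)
          (ae_of_all _ fun ω => fdp_le_sum_inv I₀ hαc _)
    _ = ∑ i ∈ I₀, ∫ ω, ψ i ω ∂μ := integral_finsetSum _ fun i _ => hψint i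
    _ ≤ ∑ _i ∈ I₀, c := Finset.sum_le_sum hψ
    _ = I₀.card * q / (β + m * q) := by rw [Finset.sum_const, nsmul_eq_mul, mul_div_assoc]

/-- Theorem A.1: if the p-values are PRDS on the true nulls (for each i ∈ I₀ and
each coordinatewise increasing function φ, E[φ(P)|P_i = u] is increasing in u),
each null p-value is stochastically dominated by Uniform[0,1], and the critical
values α_1 ≤ … ≤ α_m satisfy α_i/(1-α_i) = iq/(m-i+β) with β ≥ m(1-q),
then the step-down procedure has FDR ≤ m₀q/(β+mq) ≤ q. -/
theorem stmt_16 {Ω : Type*} [MeasurableSpace Ω] (μ : Measure Ω) [IsProbabilityMeasure μ]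
    (m : ℕ) (hm : 1 ≤ m) (q : ℝ) (hq0 : 0 < q) (hq1 : q < 1)
    (β : ℝ) (hβ : (m : ℝ) * (1 - q) ≤ β)
    (P : Fin m → Ω → ℝ) (hmeas : ∀ i, Measurable (P i))
    (hrange : ∀ i ω, P i ω ∈ Set.Icc (0 : ℝ) 1)
    (I₀ : Finset (Fin m))
    (hnull : ∀ i ∈ I₀, ∀ t : ℝ, 0 ≤ t → μ {ω | P i ω ≤ t} ≤ ENNReal.ofReal t)
    (hPRDS : ∀ i ∈ I₀, ∀ φ : (Fin m → ℝ) → ℝ, Measurable φ → Monotone φ →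
      (∀ p, |φ p| ≤ 1) →
      ∃ h : ℝ → ℝ, Monotone h ∧
        (fun ω => h (P i ω)) =ᵐ[μ]
          μ[(fun ω => φ (fun k => P k ω)) | MeasurableSpace.comap (P i) inferInstance])
    (α : ℕ → ℝ)
    (hαmono : ∀ a b : ℕ, 1 ≤ a → a ≤ b → b ≤ m → α a ≤ α b)
    (hα : ∀ i : ℕ, 1 ≤ i → i ≤ m →
      (0 < α i ∧ α i < 1) ∧
        α i / (1 - α i) = (i : ℝ) * q / ((m : ℝ) - (i : ℝ) + β)) :
    FDR μ m α I₀ P ≤ (I₀.card : ℝ) * q / (β + (m : ℝ) * q) ∧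
      (I₀.card : ℝ) * q / (β + (m : ℝ) * q) ≤ q :=
  stmt_16_general μ m q hq0 hq1 β hβ P hmeas I₀ hnull hPRDS α hα
end
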